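/- Let A be a symmetric positive definite p×p matrix with smallest eigenvalue τ_A > 0, B a p×p matrix, Y ∈ ℝᵖ, and k ≥ 1 an integer. Then |tr((A + YYᵀ)⁻ᵏ B) - tr(A⁻ᵏ B)| ≤ k‖B‖ / τ_Aᵏ. -/

import Mathlib

open Matrix

/-- Spectral (ℓ²-operator) norm of a real matrix. -/
noncomputable def opNorm {p : ℕ} (B : Matrix (Fin p) (Fin p) ℝ) : ℝ :=
  ‖Matrix.toEuclideanCLM (𝕜 := ℝ) B‖

/-!
Put `X = (A + Y Yᵀ)⁻¹`, `Z = A⁻¹`, `z = Z Y` and `s = Yᵀ z`. Coercivity of `A` (hence of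
`A + Y Yᵀ`) gives `‖X‖, ‖Z‖ ≤ 1/τ`. By Sherman–Morrison `X - Z = -(1 + s)⁻¹ z zᵀ`, and
`τ ‖z‖² ≤ zᵀ A z = s`, so `|tr (C (X - Z))| ≤ ‖C‖ ‖z‖² / (1 + s) ≤ ‖C‖ / τ` for every `C`.
Telescoping `X^k - Z^k = ∑ⱼ X^j (X - Z) Z^(k-1-j)` produces `k` such terms, each bounded by
`‖B‖ / τ^k`.
-/

open scoped Matrix.Norms.L2Operator

theorem norm_mul_pow_le {R : Type*} [SeminormedRing R] (a b : R) (k : ℕ) :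
    ‖a * b ^ k‖ ≤ ‖a‖ * ‖b‖ ^ k := by
  induction k with
  | zero => simp
  | succ k ih =>
    calc ‖a * b ^ (k + 1)‖ = ‖a * b ^ k * b‖ := by rw [pow_succ, mul_assoc]
      _ ≤ ‖a * b ^ k‖ * ‖b‖ := norm_mul_le _ _
      _ ≤ ‖a‖ * ‖b‖ ^ k * ‖b‖ := by gcongr
      _ = ‖a‖ * ‖b‖ ^ (k + 1) := by rw [pow_succ, mul_assoc]

namespace Matrix

variable {n : Type*} [Fintype n]

section Inverse

variable [DecidableEq n]

theorem inv_add_vecMulVec {K : Type*} [Field K] {A : Matrix n n K} (hA : IsUnit A)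
    (u v : n → K) (h : 1 + v ⬝ᵥ A⁻¹ *ᵥ u ≠ 0) :
    (A + vecMulVec u v)⁻¹ =
      A⁻¹ - (1 + v ⬝ᵥ A⁻¹ *ᵥ u)⁻¹ • vecMulVec (A⁻¹ *ᵥ u) (v ᵥ* A⁻¹) := by
  have hAdet : IsUnit A.det := (isUnit_iff_isUnit_det A).mp hA
  have hcol : (A + vecMulVec u v) *ᵥ (A⁻¹ *ᵥ u) = (1 + v ⬝ᵥ A⁻¹ *ᵥ u) • u := by
    rw [add_mulVec, mulVec_mulVec, mul_nonsing_inv _ hAdet, one_mulVec, vecMulVec_mulVec]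
    simp [add_smul]
  apply inv_eq_right_inv
  rw [mul_sub, mul_smul_comm, mul_vecMulVec, hcol, ← smul_vecMulVec, smul_smul,
    inv_mul_cancel₀ h, one_smul, add_mul, mul_nonsing_inv _ hAdet, vecMulVec_mul]
  abel

end Inverse

theorem dotProduct_self_eq_norm_sq (x : n → ℝ) : x ⬝ᵥ x = ‖WithLp.toLp 2 x‖ ^ 2 := by
  rw [← real_inner_self_eq_norm_sq, EuclideanSpace.inner_toLp_toLp, star_trivial]

variable [DecidableEq n]

theorem abs_dotProduct_mulVec_le (C : Matrix n n ℝ) (x y : n → ℝ) :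
    |x ⬝ᵥ C *ᵥ y| ≤ ‖C‖ * ‖WithLp.toLp 2 x‖ * ‖WithLp.toLp 2 y‖ := by
  rw [← inner_toEuclideanCLM C (WithLp.toLp 2 x) (WithLp.toLp 2 y)]
  calc _ ≤ ‖WithLp.toLp 2 x‖ * ‖toEuclideanCLM (𝕜 := ℝ) C (WithLp.toLp 2 y)‖ :=
        abs_real_inner_le_norm _ _
    _ ≤ ‖WithLp.toLp 2 x‖ * (‖C‖ * ‖WithLp.toLp 2 y‖) := by
        gcongr; exact (toEuclideanCLM (𝕜 := ℝ) C).le_opNorm _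
    _ = _ := by ring

theorem abs_dotProduct_mulVec_self_le (C : Matrix n n ℝ) (x : n → ℝ) :
    |x ⬝ᵥ C *ᵥ x| ≤ ‖C‖ * (x ⬝ᵥ x) := by
  rw [dotProduct_self_eq_norm_sq, sq, ← mul_assoc]
  exact abs_dotProduct_mulVec_le C x x

theorem l2_opNorm_inv_le {A : Matrix n n ℝ} (hA : IsUnit A) {τ : ℝ} (hτ : 0 < τ)
    (hlb : ∀ x : n → ℝ, τ * (x ⬝ᵥ x) ≤ x ⬝ᵥ A *ᵥ x) : ‖A⁻¹‖ ≤ τ⁻¹ := by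
  refine ContinuousLinearMap.opNorm_le_bound _ (inv_nonneg.mpr hτ.le) fun z => ?_
  set y := A⁻¹ *ᵥ WithLp.ofLp z
  have hAy : A *ᵥ y = WithLp.ofLp z := by
    rw [mulVec_mulVec, mul_nonsing_inv _ ((isUnit_iff_isUnit_det A).mp hA), one_mulVec]
  have hquad : τ * ‖WithLp.toLp 2 y‖ ^ 2 ≤ ‖WithLp.toLp 2 y‖ * ‖z‖ := by
    calc τ * ‖WithLp.toLp 2 y‖ ^ 2 = τ * (y ⬝ᵥ y) := by rw [dotProduct_self_eq_norm_sq]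
      _ ≤ y ⬝ᵥ A *ᵥ y := hlb y
      _ = inner ℝ (WithLp.toLp 2 y) z := by
          rw [hAy, EuclideanSpace.inner_eq_star_dotProduct, star_trivial, dotProduct_comm]
      _ ≤ ‖WithLp.toLp 2 y‖ * ‖z‖ := real_inner_le_norm _ _
  change ‖WithLp.toLp 2 y‖ ≤ τ⁻¹ * ‖z‖
  rw [le_inv_mul_iff₀ hτ]
  nlinarith [norm_nonneg (WithLp.toLp 2 y), norm_nonneg z]

theorem abs_trace_mul_inv_add_vecMulVec_self_sub_le {A : Matrix n n ℝ} (hA : A.PosDef) {τ : ℝ}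
    (hτ : 0 < τ) (hlb : ∀ x : n → ℝ, τ * (x ⬝ᵥ x) ≤ x ⬝ᵥ A *ᵥ x) (Y : n → ℝ)
    (C : Matrix n n ℝ) : |(C * ((A + vecMulVec Y Y)⁻¹ - A⁻¹)).trace| ≤ ‖C‖ / τ := by
  set z := A⁻¹ *ᵥ Y
  set s := Y ⬝ᵥ z
  have hAz : A *ᵥ z = Y := by
    rw [mulVec_mulVec, mul_nonsing_inv _ ((isUnit_iff_isUnit_det A).mp hA.isUnit), one_mulVec]
  have hzz : τ * (z ⬝ᵥ z) ≤ s := by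
    simpa only [hAz, dotProduct_comm z Y] using hlb z
  have hs : 0 ≤ s := (mul_nonneg hτ.le (dotProduct_self_star_nonneg z)).trans hzz
  have hYz : Y ᵥ* A⁻¹ = z := by
    rw [← mulVec_transpose, ← conjTranspose_eq_transpose_of_trivial, hA.isHermitian.inv.eq]
  have htrace : (C * ((A + vecMulVec Y Y)⁻¹ - A⁻¹)).trace = -((1 + s)⁻¹ * (z ⬝ᵥ C *ᵥ z)) := by
    rw [inv_add_vecMulVec hA.isUnit Y Y (by positivity), hYz, sub_sub_cancel_left, mul_neg,
      mul_smul_comm, trace_neg, trace_smul, mul_vecMulVec, trace_vecMulVec,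
      dotProduct_comm (C *ᵥ z), smul_eq_mul]
  rw [htrace, abs_neg, abs_mul, abs_of_pos (by positivity)]
  calc (1 + s)⁻¹ * |z ⬝ᵥ C *ᵥ z| ≤ (1 + s)⁻¹ * (‖C‖ * (s / τ)) := by
        gcongr
        exact (abs_dotProduct_mulVec_self_le C z).trans
          (by gcongr; rwa [le_div_iff₀ hτ, mul_comm])
    _ = ‖C‖ / τ * (s / (1 + s)) := by ring
    _ ≤ ‖C‖ / τ := mul_le_of_le_one_right (by positivity)
        ((div_le_one (by positivity)).mpr (by linarith))

theorem abs_trace_pow_mul_sub_pow_mul_le {X Z : Matrix n n ℝ} {τ : ℝ} (hτ : 0 < τ)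
    (hX : ‖X‖ ≤ τ⁻¹) (hZ : ‖Z‖ ≤ τ⁻¹) (hXZ : ∀ C, |(C * (X - Z)).trace| ≤ ‖C‖ / τ)
    (k : ℕ) (B : Matrix n n ℝ) :
    |(X ^ k * B).trace - (Z ^ k * B).trace| ≤ k * ‖B‖ / τ ^ k := by
  induction k generalizing B with
  | zero => simp
  | succ k ih =>
    have hcycle : (B * X ^ k * (X - Z)).trace =
        (X ^ k * (X * B)).trace - (X ^ k * (Z * B)).trace := by
      rw [mul_assoc, trace_mul_comm, mul_assoc, sub_mul, mul_sub, trace_sub]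
    have hsplit : (X ^ (k + 1) * B).trace - (Z ^ (k + 1) * B).trace =
        (B * X ^ k * (X - Z)).trace + ((X ^ k * (Z * B)).trace - (Z ^ k * (Z * B)).trace) := by
      rw [pow_succ, pow_succ, mul_assoc, mul_assoc, hcycle]
      ring
    have hfirst : |(B * X ^ k * (X - Z)).trace| ≤ ‖B‖ / τ ^ (k + 1) :=
      calc _ ≤ ‖B * X ^ k‖ / τ := hXZ _
        _ ≤ ‖B‖ * τ⁻¹ ^ k / τ := by
          gcongr
          exact (norm_mul_pow_le B X k).trans (by gcongr)
        _ = ‖B‖ / τ ^ (k + 1) := by rw [inv_pow, pow_succ]; field_simp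
    have hsecond : |(X ^ k * (Z * B)).trace - (Z ^ k * (Z * B)).trace| ≤ k * ‖B‖ / τ ^ (k + 1) :=
      calc _ ≤ k * ‖Z * B‖ / τ ^ k := ih _
        _ ≤ k * (τ⁻¹ * ‖B‖) / τ ^ k := by
          gcongr
          exact (norm_mul_le Z B).trans (by gcongr)
        _ = k * ‖B‖ / τ ^ (k + 1) := by field_simp; ring
    calc _ ≤ ‖B‖ / τ ^ (k + 1) + k * ‖B‖ / τ ^ (k + 1) := by
          rw [hsplit]; exact (abs_add_le _ _).trans (add_le_add hfirst hsecond)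
      _ = (k + 1 : ℕ) * ‖B‖ / τ ^ (k + 1) := by push_cast; ring

end Matrix

theorem trace_resolvent_pow_rank_one_perturbation_general {p : ℕ}
    (A B : Matrix (Fin p) (Fin p) ℝ) (Y : Fin p → ℝ) (τA : ℝ) (k : ℕ)
    (hA : A.PosDef) (hτ : 0 < τA)
    (hlb : ∀ x : Fin p → ℝ, τA * (x ⬝ᵥ x) ≤ x ⬝ᵥ (A *ᵥ x)) :
    |(((A + vecMulVec Y Y)⁻¹) ^ k * B).trace - ((A⁻¹) ^ k * B).trace| ≤
      k * opNorm B / τA ^ k := by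
  have hM : (A + vecMulVec Y Y).PosDef := hA.add_posSemidef (posSemidef_vecMulVec_self_star Y)
  have hlbM : ∀ x : Fin p → ℝ, τA * (x ⬝ᵥ x) ≤ x ⬝ᵥ (A + vecMulVec Y Y) *ᵥ x := by
    intro x
    have hYY := (posSemidef_vecMulVec_self_star Y).dotProduct_mulVec_nonneg x
    simp only [star_trivial] at hYY
    rw [add_mulVec, dotProduct_add]
    linarith [hlb x]
  -- `opNorm B` is definitionally the L² operator norm `‖B‖` of `Matrix.Norms.L2Operator`.
  exact abs_trace_pow_mul_sub_pow_mul_le hτ (l2_opNorm_inv_le hM.isUnit hτ hlbM)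
    (l2_opNorm_inv_le hA.isUnit hτ hlb)
    (abs_trace_mul_inv_add_vecMulVec_self_sub_le hA hτ hlb Y) k B

/-- Rank-one perturbation bound for the trace of powers of the resolvent. -/
theorem trace_resolvent_pow_rank_one_perturbation {p : ℕ}
    (A B : Matrix (Fin p) (Fin p) ℝ) (Y : Fin p → ℝ) (τA : ℝ) (k : ℕ)
    (hk : 1 ≤ k) (hA : A.PosDef) (hτ : 0 < τA)
    (hlb : ∀ x : Fin p → ℝ, τA * (x ⬝ᵥ x) ≤ x ⬝ᵥ (A *ᵥ x)) :
    |(((A + vecMulVec Y Y)⁻¹) ^ k * B).trace - ((A⁻¹) ^ k * B).trace| ≤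
      k * opNorm B / τA ^ k :=
  trace_resolvent_pow_rank_one_perturbation_general A B Y τA k hA hτ hlb
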